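/- arXiv:0902.1910 — 2 statements merged into one kernel-verified Lean document; each statement's English description precedes it below -/
import Mathlib

section
/- Let p, q be coprime integers with p ≠ 0, let t ∈ ℝ with t ≠ 0, and let v = t·(p,q). Then the least positive real number s such that there exists γ ∈ SL(2,ℤ) with γ·σ(v) = σ(v)·u(s) is s = 1/t². (This least positive s is called the period ρ(v) of v.) -/
open Matrix MeasureTheory Filter Topology

noncomputable section

abbrev SL2Z := Matrix.SpecialLinearGroup (Fin 2) ℤ

/-- The real matrix associated to an element of `SL(2,ℤ)`. -/
def toR (γ : SL2Z) : Matrix (Fin 2) (Fin 2) ℝ :=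
  (γ : Matrix (Fin 2) (Fin 2) ℤ).map (Int.cast)

/-- The Euclidean plane. -/
abbrev E2 := EuclideanSpace ℝ (Fin 2)

/-- The vector of `ℝ²` with coordinates `a`, `b`. -/
def vec (a b : ℝ) : E2 := (WithLp.equiv 2 (Fin 2 → ℝ)).symm ![a, b]

/-- The action of `SL(2,ℤ)` on `ℝ²` by matrix-vector multiplication. -/
def act (γ : SL2Z) (v : E2) : E2 :=
  (WithLp.equiv 2 (Fin 2 → ℝ)).symm ((toR γ).mulVec (WithLp.equiv 2 (Fin 2 → ℝ) v))

/-- The Frobenius (euclidean) norm of a 2×2 real matrix. -/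
def frobNorm (A : Matrix (Fin 2) (Fin 2) ℝ) : ℝ := Real.sqrt (∑ i, ∑ j, (A i j) ^ 2)

/-- A vector of `ℝ²` is primitive if its coordinates are coprime integers. -/
def IsPrimitive (v : E2) : Prop := ∃ p q : ℤ, Int.gcd p q = 1 ∧ v 0 = p ∧ v 1 = q

/-- The set of points of rational slope and period `ρ`: points `v` such that `√ρ • v`
is primitive. -/
def P (ρ : ℝ) : Set E2 := {v | IsPrimitive (Real.sqrt ρ • v)}

/-- The spectrum of periods of `v`: the euclidean distance from `v` to `P ρ`. -/
def Dv (v : E2) (ρ : ℝ) : ℝ := Metric.infDist v (P ρ)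

/-- The unipotent matrix `u(s) = [[1, s], [0, 1]]`. -/
def uMat (s : ℝ) : Matrix (Fin 2) (Fin 2) ℝ := !![1, s; 0, 1]

/-- The section `σ(a, b) = [[a, 0], [b, a⁻¹]]`. -/
def σMat (a b : ℝ) : Matrix (Fin 2) (Fin 2) ℝ := !![a, 0; b, a⁻¹]

/-!
If `γ σ(a, b) = σ(a, b) u(s)` with `a ≠ 0`, then `γ = σ u(s) σ⁻¹ = [[1 - abs, a²s], [-b²s, 1 + abs]]`.
For `(a, b) = t (p, q)` the off-diagonal entries are `p² (t²s)` and `-q² (t²s)`, so if they are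
integers a Bézout relation `x p² + y q² = 1` makes `t²s` an integer; conversely every integer
`k = t²s` gives a matrix of `SL(2,ℤ)`. The admissible `s` are thus the `k / t²` with `k ∈ ℤ`.
-/

lemma det_σMat {a : ℝ} (ha : a ≠ 0) (b : ℝ) : (σMat a b).det = 1 := by
  simp [σMat, Matrix.det_fin_two_of, ha]

lemma mul_σMat_eq_σMat_mul_uMat_iff {a : ℝ} (ha : a ≠ 0) (b s : ℝ)
    (M : Matrix (Fin 2) (Fin 2) ℝ) :
    M * σMat a b = σMat a b * uMat s ↔
      M = !![1 - a * b * s, a ^ 2 * s; -(b ^ 2 * s), 1 + a * b * s] := by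
  have hconj : !![1 - a * b * s, a ^ 2 * s; -(b ^ 2 * s), 1 + a * b * s] * σMat a b =
      σMat a b * uMat s := by
    ext i j
    fin_cases i <;> fin_cases j <;> simp [σMat, uMat] <;> field_simp <;> ring
  have hσ : IsUnit (σMat a b) := by
    rw [Matrix.isUnit_iff_isUnit_det, det_σMat ha]
    exact isUnit_one
  rw [← hconj, hσ.mul_left_inj]

lemma IsCoprime.exists_intCast_eq_of_mul_eq_intCast {R : Type*} [CommRing R] {p q : ℤ}
    (hpq : IsCoprime p q) {r : R} {m n : ℤ} (hm : r * p = m) (hn : r * q = n) :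
    ∃ k : ℤ, r = k := by
  obtain ⟨x, y, hxy⟩ := hpq
  refine ⟨x * m + y * n, ?_⟩
  calc r = r * ((x * p + y * q : ℤ) : R) := by rw [hxy, Int.cast_one, mul_one]
    _ = _ := by push_cast; rw [← hm, ← hn]; ring

lemma exists_SL2Z_mul_σMat_iff {p q : ℤ} (hpq : IsCoprime p q) (hp : p ≠ 0) {t : ℝ}
    (ht : t ≠ 0) (s : ℝ) :
    (∃ γ : SL2Z, toR γ * σMat (t * p) (t * q) = σMat (t * p) (t * q) * uMat s) ↔
      ∃ k : ℤ, t ^ 2 * s = k := by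
  have ha : t * p ≠ 0 := mul_ne_zero ht (Int.cast_ne_zero.mpr hp)
  simp only [mul_σMat_eq_σMat_mul_uMat_iff ha]
  constructor
  · rintro ⟨γ, hγ⟩
    have h01 : ((γ 0 1 : ℤ) : ℝ) = (t * p) ^ 2 * s := congr_fun₂ hγ 0 1
    have h10 : ((γ 1 0 : ℤ) : ℝ) = -((t * q) ^ 2 * s) := congr_fun₂ hγ 1 0
    refine (hpq.pow (m := 2) (n := 2)).exists_intCast_eq_of_mul_eq_intCast
      (m := γ 0 1) (n := -γ 1 0) ?_ ?_
    · push_cast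
      linear_combination -h01
    · push_cast
      linear_combination h10
  · rintro ⟨k, hk⟩
    refine ⟨⟨!![1 - p * q * k, p ^ 2 * k; -(q ^ 2 * k), 1 + p * q * k], ?_⟩, ?_⟩
    · rw [Matrix.det_fin_two_of]
      ring
    · ext i j
      fin_cases i <;> fin_cases j <;> simp [toR, ← hk] <;> ring

/-- For `v = t·(p,q)` with `p, q` coprime, `p ≠ 0`, `t ≠ 0`, the least positive real `s`
such that `γ·σ(v) = σ(v)·u(s)` for some `γ ∈ SL(2,ℤ)` is `1/t²` (the period of `v`). -/
theorem period_eq (p q : ℤ) (hpq : Int.gcd p q = 1) (hp : p ≠ 0) (t : ℝ) (ht : t ≠ 0) :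
    IsLeast {s : ℝ | 0 < s ∧
        ∃ γ : SL2Z, toR γ * σMat (t * p) (t * q) = σMat (t * p) (t * q) * uMat s}
      (1 / t ^ 2) := by
  have ht2 : 0 < t ^ 2 := by positivity
  simp only [exists_SL2Z_mul_σMat_iff (Int.isCoprime_iff_gcd_eq_one.mpr hpq) hp ht]
  refine ⟨⟨by positivity, 1, by field_simp; norm_num⟩, ?_⟩
  rintro s ⟨hs, k, hk⟩
  have hk_pos : (0 : ℤ) < k := by exact_mod_cast hk ▸ mul_pos ht2 hs
  have hk_one : (1 : ℝ) ≤ k := by exact_mod_cast hk_pos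
  rw [div_le_iff₀ ht2]
  linarith
end
end

section
/- Let v ∈ ℝ² be nonzero, let w ∈ ℝ² be a nonzero vector of rational slope satisfying |w| ≥ 2·|v|·h(w), let T > 0, and let γ ∈ SL(2,ℤ) with ‖γ‖ ≤ T. Then |γ·v − w| ≥ |w|/(2·h(w)·T). -/
/-! Apply `γ⁻¹`, which has the same Frobenius norm as `γ`: it sends `γ·v − w` to `v − γ⁻¹·w`.
Since `w = t·(p,q)` and `γ⁻¹·(p,q)` is a nonzero integer vector, `|γ⁻¹·w| ≥ |t| = |w|/h(w)`,
while the hypothesis says `|v| ≤ |t|/2`. Hence `T·|γ·v − w| ≥ |v − γ⁻¹·w| ≥ |t|/2`. -/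

open Matrix MeasureTheory Filter Topology

noncomputable section

lemma toR_mul (γ δ : SL2Z) : toR (γ * δ) = toR γ * toR δ :=
  Matrix.map_mul (f := Int.castRingHom ℝ)

lemma act_eq_toLpLin (γ : SL2Z) (u : E2) : act γ u = Matrix.toLpLin 2 2 (toR γ) u := rfl

lemma act_mul (γ δ : SL2Z) (u : E2) : act (γ * δ) u = act γ (act δ u) := by
  simp only [act, toR_mul, Equiv.apply_symm_apply, mulVec_mulVec]

lemma act_inv_act (γ : SL2Z) (u : E2) : act γ⁻¹ (act γ u) = u := by
  rw [← act_mul, inv_mul_cancel]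
  simp [act, toR]

lemma act_sub (γ : SL2Z) (a b : E2) : act γ (a - b) = act γ a - act γ b := by
  simp only [act_eq_toLpLin, map_sub]

lemma act_smul (γ : SL2Z) (c : ℝ) (a : E2) : act γ (c • a) = c • act γ a := by
  simp only [act_eq_toLpLin, map_smul]

lemma act_apply (γ : SL2Z) (u : E2) (i : Fin 2) :
    act γ u i = toR γ i 0 * u 0 + toR γ i 1 * u 1 := by
  fin_cases i <;> simp [act]

lemma norm_eq_sqrt_sq_add_sq (u : E2) : ‖u‖ = √(u 0 ^ 2 + u 1 ^ 2) := by
  simp [EuclideanSpace.norm_eq, Fin.sum_univ_two]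

lemma norm_vec (a b : ℝ) : ‖_root_.vec a b‖ = √(a ^ 2 + b ^ 2) :=
  norm_eq_sqrt_sq_add_sq _

lemma norm_act_le (γ : SL2Z) (u : E2) : ‖act γ u‖ ≤ frobNorm (toR γ) * ‖u‖ := by
  set A := toR γ
  rw [norm_eq_sqrt_sq_add_sq, norm_eq_sqrt_sq_add_sq, frobNorm, ← Real.sqrt_mul (by positivity)]
  refine Real.sqrt_le_sqrt ?_
  simp only [act_apply, Fin.sum_univ_two]
  -- Cauchy–Schwarz in each row, via Lagrange's identity
  nlinarith [sq_nonneg (A 0 0 * u 1 - A 0 1 * u 0), sq_nonneg (A 1 0 * u 1 - A 1 1 * u 0)]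

lemma frobNorm_toR_inv (γ : SL2Z) : frobNorm (toR γ⁻¹) = frobNorm (toR γ) := by
  simp only [frobNorm, toR, Fin.sum_univ_two, Matrix.SpecialLinearGroup.coe_inv,
    Matrix.adjugate_fin_two]
  simp [Matrix.map_apply]
  ring_nf

lemma one_le_norm_of_forall_intCast {n : ℕ} (x : EuclideanSpace ℝ (Fin n))
    (hx : ∀ i, ∃ m : ℤ, x i = m) (h0 : x ≠ 0) : 1 ≤ ‖x‖ := by
  obtain ⟨i, hi⟩ : ∃ i, x i ≠ 0 := by
    by_contra! h
    exact h0 (PiLp.ext h)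
  obtain ⟨m, hm⟩ := hx i
  rw [hm, Int.cast_ne_zero] at hi
  calc (1 : ℝ) ≤ |(m : ℝ)| := by exact_mod_cast Int.one_le_abs hi
    _ = ‖x i‖ := by rw [hm, Real.norm_eq_abs]
    _ ≤ ‖x‖ := PiLp.norm_apply_le x i

lemma one_le_norm_act_vec_intCast (γ : SL2Z) (a b : ℤ) (hab : _root_.vec a b ≠ 0) :
    1 ≤ ‖act γ (_root_.vec a b)‖ := by
  refine one_le_norm_of_forall_intCast _ (fun i => ?_) fun h => hab ?_
  · exact ⟨(γ : Matrix (Fin 2) (Fin 2) ℤ) i 0 * a + (γ : Matrix (Fin 2) (Fin 2) ℤ) i 1 * b,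
      by simp [act_apply, _root_.vec, toR]⟩
  · rw [← act_inv_act γ (_root_.vec a b), h, act_eq_toLpLin, map_zero]

theorem gap_around_rational_simple_general (v : E2) (t : ℝ) (p q : ℤ)
    (hpq : Int.gcd p q = 1) (w : E2) (hw : w = t • vec (p : ℝ) (q : ℝ))
    (hbig : 2 * ‖v‖ * Real.sqrt ((p : ℝ) ^ 2 + (q : ℝ) ^ 2) ≤ ‖w‖)
    (T : ℝ) (γ : SL2Z) (hγ : frobNorm (toR γ) ≤ T) :
    ‖w‖ / (2 * Real.sqrt ((p : ℝ) ^ 2 + (q : ℝ) ^ 2) * T) ≤ dist (act γ v) w := by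
  set h := Real.sqrt ((p : ℝ) ^ 2 + (q : ℝ) ^ 2)
  have hpq0 : vec (p : ℝ) (q : ℝ) ≠ 0 := fun h0 => by
    have hp : (p : ℝ) = 0 := congr($h0 0)
    have hq : (q : ℝ) = 0 := congr($h0 1)
    norm_cast at hp hq
    simp [hp, hq] at hpq
  have hh : 0 < h := by simpa only [norm_vec] using norm_pos_iff.mpr hpq0
  have hw_norm : ‖w‖ = |t| * h := by rw [hw, norm_smul, norm_vec, Real.norm_eq_abs]
  have hv : ‖v‖ ≤ |t| / 2 := by nlinarith
  have hγw : |t| ≤ ‖act γ⁻¹ w‖ := by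
    rw [hw, act_smul, norm_smul, Real.norm_eq_abs]
    exact le_mul_of_one_le_right (abs_nonneg t) (one_le_norm_act_vec_intCast _ p q hpq0)
  have key : |t| / 2 ≤ T * dist (act γ v) w :=
    calc |t| / 2 ≤ ‖act γ⁻¹ w‖ - ‖v‖ := by linarith
      _ ≤ ‖act γ⁻¹ w - v‖ := norm_sub_norm_le _ _
      _ = ‖act γ⁻¹ (w - act γ v)‖ := by rw [act_sub, act_inv_act]
      _ ≤ frobNorm (toR γ⁻¹) * ‖w - act γ v‖ := norm_act_le _ _
      _ ≤ T * dist (act γ v) w := by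
        rw [frobNorm_toR_inv, dist_comm, dist_eq_norm]
        gcongr
  have hT : 0 ≤ T := (Real.sqrt_nonneg _).trans hγ
  rw [hw_norm]
  refine div_le_of_le_mul₀ (by positivity) dist_nonneg ?_
  nlinarith

/-- If `w = t·(p,q)` is a nonzero vector of rational slope of height
`h(w) = √(p²+q²)` with `|w| ≥ 2·|v|·h(w)`, and `γ ∈ SL(2,ℤ)` has norm at most `T`,
then `|γ·v − w| ≥ |w|/(2·h(w)·T)`. -/
theorem gap_around_rational_simple (v : E2) (hv : v ≠ 0) (t : ℝ) (ht : t ≠ 0) (p q : ℤ)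
    (hpq : Int.gcd p q = 1) (w : E2) (hw : w = t • vec (p : ℝ) (q : ℝ))
    (hbig : 2 * ‖v‖ * Real.sqrt ((p : ℝ) ^ 2 + (q : ℝ) ^ 2) ≤ ‖w‖)
    (T : ℝ) (hT : 0 < T) (γ : SL2Z) (hγ : frobNorm (toR γ) ≤ T) :
    ‖w‖ / (2 * Real.sqrt ((p : ℝ) ^ 2 + (q : ℝ) ^ 2) * T) ≤ dist (act γ v) w :=
  gap_around_rational_simple_general v t p q hpq w hw hbig T γ hγ
end
end
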